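/- In the deterministic type system, the value of a derivation D for a closed lambda-term M of sort o is positive if and only if the derived productivity flag is pr. -/
import Mathlib


namespace STLC

inductive Ty : Type
  | o : Ty
  | arrow : Ty → Ty → Ty

/-- Intersection types refining sorts, with productivity flags
(`true` = `pr`, `false` = `np`):
`𝒯^o = {r}` and `𝒯^{α→β} = 𝒫({pr,np} × 𝒯^α) × 𝒯^β` (finite subsets). -/
def ITy : Ty → Type
  | .o => PUnit
  | .arrow α β => Finset (Bool × ITy α) × ITy β

noncomputable instance ITy.deq (α : Ty) : DecidableEq (ITy α) := Classical.decEq _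
noncomputable instance (α : Ty) : DecidableEq (Bool × ITy α) := Classical.decEq _

def ITy.base : ITy .o := PUnit.unit

def ITy.arr {α β : Ty} (T : Finset (Bool × ITy α)) (τ : ITy β) : ITy (.arrow α β) :=
  (T, τ)

/-- Intrinsically simply-typed lambda-terms in de Bruijn representation,
over the signature `a : o → o`, `b : o → o → o`, `e : o`. -/
inductive Tm : List Ty → Ty → Type
  | var {Γ} (i : Fin Γ.length) : Tm Γ (Γ.get i)
  | ca {Γ} : Tm Γ (.arrow .o .o)
  | cb {Γ} : Tm Γ (.arrow .o (.arrow .o .o))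
  | ce {Γ} : Tm Γ .o
  | lam {Γ γ δ} (K : Tm (γ :: Γ) δ) : Tm Γ (.arrow γ δ)
  | app {Γ γ δ} (K : Tm Γ (.arrow γ δ)) (L : Tm Γ γ) : Tm Γ δ

/-- A type environment: to each variable of the context it assigns a finite set
of (flag, type) pairs (possibly several bindings per variable). -/
def Env (Γ : List Ty) := ∀ i : Fin Γ.length, Finset (Bool × ITy (Γ.get i))

/-- The empty type environment. -/
def Env.empty {Γ : List Ty} : Env Γ := fun _ => ∅

/-- The environment with the single binding `xᵢ : (f, τ)`. -/
noncomputable def Env.single {Γ : List Ty} (i : Fin Γ.length)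
    (p : Bool × ITy (Γ.get i)) : Env Γ :=
  fun j => if h : i = j then {h ▸ p} else ∅

/-- Extending an environment with the set of bindings for a fresh variable. -/
def Env.cons {Γ : List Ty} {γ : Ty} (T : Finset (Bool × ITy γ)) (E : Env Γ) :
    Env (γ :: Γ) := fun j =>
  match j with
  | ⟨0, _⟩ => T
  | ⟨i + 1, h⟩ => E ⟨i, Nat.lt_of_succ_lt_succ h⟩

/-- `|Γ↾pr|`: the number of productive bindings in an environment. -/
noncomputable def Env.prSize {Γ : List Ty} (E : Env Γ) : ℕ :=
  ∑ i : Fin Γ.length, ((E i).filter (fun p => p.1 = true)).card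

/-- The union `Γ ∪ ⋃_{i ∈ I} Γᵢ` of the environments of an application node. -/
noncomputable def Env.appUnion {Γ : List Ty} {ι : Type} [Fintype ι]
    (E₀ : Env Γ) (Es : ι → Env Γ) : Env Γ :=
  fun i => E₀ i ∪ Finset.univ.biUnion (fun p => Es p i)

/-- Derivations in the deterministic intersection type system of Section 3.
`Der E M f τ` derives the judgment `E ⊢ M : (f, τ)`
(`f = true` means the flag `pr`, `f = false` means `np`). -/
inductive Der : ∀ {Γ : List Ty} {α : Ty}, Env Γ → Tm Γ α → Bool → ITy α → Type where
  | ca {Γ : List Ty} (f : Bool) :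
      Der (Γ := Γ) Env.empty .ca true (ITy.arr {(f, ITy.base)} ITy.base)
  | cb {Γ : List Ty} (f₁ f₂ : Bool) :
      Der (Γ := Γ) Env.empty .cb false
        (ITy.arr {(f₁, ITy.base)} (ITy.arr {(f₂, ITy.base)} ITy.base))
  | ce {Γ : List Ty} :
      Der (Γ := Γ) Env.empty .ce false ITy.base
  | var {Γ : List Ty} (i : Fin Γ.length) (f : Bool) (τ : ITy (Γ.get i)) :
      Der (Env.single i (f, τ)) (.var i) false τ
  | lam {Γ : List Ty} {γ δ : Ty} {K : Tm (γ :: Γ) δ} {E : Env Γ}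
      {T : Finset (Bool × ITy γ)} {f : Bool} {τ : ITy δ} :
      Der (Env.cons T E) K f τ →
      Der E (.lam K) f (ITy.arr T τ)
  | app {Γ : List Ty} {γ δ : Ty} {K : Tm Γ (.arrow γ δ)} {L : Tm Γ γ}
      {T : Finset (Bool × ITy γ)} {τ : ITy δ} {f' : Bool} {E₀ : Env Γ}
      (dK : Der E₀ K f' (ITy.arr T τ))
      (fo : {p // p ∈ T} → Bool) (Es : {p // p ∈ T} → Env Γ)
      (dL : ∀ p : {p // p ∈ T}, Der (Es p) L (fo p) p.1.2)
      (hb : ∀ p : {p // p ∈ T}, p.1.1 = (fo p || decide (0 < (Es p).prSize)))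
      (f : Bool)
      (hf : f = true ↔
        (f' = true ∨ (∃ p, fo p = true) ∨
          Env.prSize (Env.appUnion E₀ Es) < E₀.prSize + ∑ p : {p // p ∈ T}, (Es p).prSize)) :
      Der (Env.appUnion E₀ Es) (.app K L) f τ

/-- The value of a derivation: the sum over all nodes of the node values
(`1` at `a`-nodes, the number of duplicated productive bindings at application
nodes, `0` elsewhere). -/
noncomputable def Der.val :
    ∀ {Γ : List Ty} {α : Ty} {E : Env Γ} {M : Tm Γ α} {f : Bool} {τ : ITy α},
      Der E M f τ → ℕ
  | _, _, _, _, _, _, .ca _ => 1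
  | _, _, _, _, _, _, .cb _ _ => 0
  | _, _, _, _, _, _, .ce => 0
  | _, _, _, _, _, _, .var _ _ _ => 0
  | _, _, _, _, _, _, .lam d => d.val
  | _, _, _, _, _, _, .app (E₀ := E₀) dK fo Es dL _ _ _ =>
      (E₀.prSize + (∑ p, (Es p).prSize) - Env.prSize (Env.appUnion E₀ Es))
        + dK.val + ∑ p, (dL p).val

theorem val_pos_iff_general :
    ∀ {Γ : List Ty} {α : Ty} {E : Env Γ} {M : Tm Γ α} {f : Bool} {τ : ITy α}
      (D : Der E M f τ), 0 < D.val ↔ f = true := by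
  intro Γ α E M f τ D
  induction D with
  | ca f => simp [Der.val]
  | cb f₁ f₂ => simp [Der.val]
  | ce => simp [Der.val]
  | var i f τ => simp [Der.val]
  | lam d ih => simpa [Der.val] using ih
  | app dK fo Es dL hb f hf ihK ihL =>
    simp only [Der.val]
    constructor
    · intro hpos
      cases f with
      | true => rfl
      | false =>
        exfalso
        simp only [Bool.false_eq_true, false_iff] at hf
        push_neg at hf
        obtain ⟨h1, h2, h3⟩ := hf
        have hK : dK.val = 0 := by
          cases hvk : dK.val with
          | zero => rfl
          | succ n => exact absurd (ihK.mp (by omega)) h1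
        have hS : ∑ p, (dL p).val = 0 := by
          refine Finset.sum_eq_zero (fun p _ => ?_)
          cases hvl : (dL p).val with
          | zero => rfl
          | succ n => exact absurd ((ihL p).mp (by omega)) (h2 p)
        omega
    · intro hft
      rcases hf.mp hft with h | ⟨p, hp⟩ | h
      · have := ihK.mpr h; omega
      · have h1 := (ihL p).mpr hp
        have h2 : (dL p).val ≤ ∑ q, (dL q).val :=
          Finset.single_le_sum (f := fun q => (dL q).val) (fun _ _ => Nat.zero_le _)
            (Finset.mem_univ p)
        omega
      · omega

/-- In the deterministic type system, the value of a derivation `D` for a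
closed lambda-term `M` of sort `o` is positive if and only if the derived
productivity flag is `pr`. -/
theorem val_pos_iff_productive (M : Tm [] .o) (f : Bool)
    (D : Der Env.empty M f ITy.base) :
    0 < D.val ↔ f = true := val_pos_iff_general D

end STLC
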